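/- arXiv:2511.05775 — 2 statements merged into one kernel-verified Lean document; each statement's English description precedes it below -/
import Mathlib

section
/- For ω ∈ ℝ³ with θ = ‖ω‖ ≠ 0, the kernel Q_r(ω) = ∫₀¹ s·exp(s[ω]×) ds has the closed form Q_r(ω) = (1/2)I + ((sin θ − θ cos θ)/θ³)[ω]× + (1/(2θ²) − sin θ/θ³ − (cos θ − 1)/θ⁴)[ω]×². -/
open Matrix Real

/-- Skew-symmetric (cross-product) matrix of a vector in ℝ³. -/
noncomputable def skew (ω : Fin 3 → ℝ) : Matrix (Fin 3) (Fin 3) ℝ :=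
  !![0, -ω 2, ω 1; ω 2, 0, -ω 0; -ω 1, ω 0, 0]


/-- Matrix exponential on 3×3 real matrices. -/
noncomputable def mexp (A : Matrix (Fin 3) (Fin 3) ℝ) : Matrix (Fin 3) (Fin 3) ℝ :=
  letI : NormedRing (Matrix (Fin 3) (Fin 3) ℝ) := Matrix.linftyOpNormedRing
  letI : NormedAlgebra ℝ (Matrix (Fin 3) (Fin 3) ℝ) := Matrix.linftyOpNormedAlgebra
  NormedSpace.exp A

/-! Since `[ω]×³ = -θ² [ω]×`, the odd and even parts of the exponential series of `s [ω]×` are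
the sine and cosine series in `s θ` (Rodrigues' formula). Entrywise, the kernel is therefore the
integral over `[0, 1]` of `s` times a combination of `1`, `sin (s θ)` and `1 - cos (s θ)`, which
is read off the antiderivatives of `s sin (s θ)` and `s cos (s θ)`. -/

section Rodrigues

open scoped Nat

variable {𝔸 : Type*} [Ring 𝔸] [Algebra ℝ 𝔸] {K : 𝔸} {θ : ℝ}

theorem pow_two_mul_add_one_of_pow_three (h : K ^ 3 = (-θ ^ 2) • K) (m : ℕ) :
    K ^ (2 * m + 1) = (-θ ^ 2) ^ m • K := by
  induction m with
  | zero => simp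
  | succ m ih =>
    rw [show 2 * (m + 1) + 1 = 2 * m + 1 + 2 by ring, pow_add, ih, smul_mul_assoc,
      ← pow_succ' K 2, h, smul_smul, ← pow_succ]

theorem pow_two_mul_add_two_of_pow_three (h : K ^ 3 = (-θ ^ 2) • K) (m : ℕ) :
    K ^ (2 * m + 2) = (-θ ^ 2) ^ m • (K * K) := by
  rw [pow_succ, pow_two_mul_add_one_of_pow_three h, smul_mul_assoc]

variable [TopologicalSpace 𝔸] [IsTopologicalRing 𝔸] [ContinuousSMul ℝ 𝔸] [T2Space 𝔸]

theorem exp_smul_of_pow_three (hθ : θ ≠ 0) (h : K ^ 3 = (-θ ^ 2) • K) (s : ℝ) :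
    NormedSpace.exp (s • K)
      = 1 + (sin (s * θ) / θ) • K + ((1 - cos (s * θ)) / θ ^ 2) • (K * K) := by
  rw [NormedSpace.exp_eq_tsum ℝ]
  refine HasSum.tsum_eq ?_
  have hodd : HasSum (fun k : ℕ => ((2 * k + 1)! : ℝ)⁻¹ • (s • K) ^ (2 * k + 1))
      ((sin (s * θ) / θ) • K) := by
    refine (((hasSum_sin (s * θ)).div_const θ).smul_const K).congr_fun fun k => ?_
    rw [smul_pow, pow_two_mul_add_one_of_pow_three h, smul_smul, smul_smul]
    congr 1
    field_simp
    ring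
  have heven : HasSum (fun k : ℕ => ((2 * k)! : ℝ)⁻¹ • (s • K) ^ (2 * k))
      (1 + ((1 - cos (s * θ)) / θ ^ 2) • (K * K)) := by
    have hcos : HasSum (fun k : ℕ => (-1) ^ (k + 1) * (s * θ) ^ (2 * (k + 1)) / (2 * (k + 1))!)
        (cos (s * θ) - 1) := by
      simpa using (hasSum_nat_add_iff' 1).mpr (hasSum_cos (s * θ))
    rw [← hasSum_nat_add_iff' 1, Finset.sum_range_one]
    simp only [mul_zero, pow_zero, Nat.factorial_zero, Nat.cast_one, inv_one, one_smul,
      add_sub_cancel_left]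
    rw [show (1 - cos (s * θ)) / θ ^ 2 = -(cos (s * θ) - 1) / θ ^ 2 by ring]
    refine ((hcos.neg.div_const (θ ^ 2)).smul_const (K * K)).congr_fun fun k => ?_
    rw [show 2 * (k + 1) = 2 * k + 2 by ring, smul_pow, pow_two_mul_add_two_of_pow_three h,
      smul_smul, smul_smul]
    congr 1
    field_simp
    ring
  convert HasSum.even_add_odd (f := fun n : ℕ => (n ! : ℝ)⁻¹ • (s • K) ^ n) heven hodd using 1
  abel

end Rodrigues

theorem skew_pow_three (ω : EuclideanSpace ℝ (Fin 3)) : skew ω ^ 3 = (-‖ω‖ ^ 2) • skew ω := by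
  rw [EuclideanSpace.real_norm_sq_eq, Fin.sum_univ_three]
  ext i j
  fin_cases i <;> fin_cases j <;> simp [skew, pow_succ, mul_apply, Fin.sum_univ_succ] <;> ring

theorem mexp_smul_skew (ω : EuclideanSpace ℝ (Fin 3)) (hω : ‖ω‖ ≠ 0) (s : ℝ) :
    mexp (s • skew ω)
      = 1 + (sin (s * ‖ω‖) / ‖ω‖) • skew ω
        + ((1 - cos (s * ‖ω‖)) / ‖ω‖ ^ 2) • (skew ω * skew ω) :=
  -- `NormedSpace.exp` only sees the topology, and the `linftyOp` topology is the product one.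
  exp_smul_of_pow_three hω (skew_pow_three ω) s

section Integrals

variable {θ : ℝ}

theorem integral_mul_sin_mul (hθ : θ ≠ 0) :
    ∫ s in (0:ℝ)..1, s * sin (s * θ) = (sin θ - θ * cos θ) / θ ^ 2 := by
  have hderiv (s : ℝ) : HasDerivAt (fun x => (sin (x * θ) - x * θ * cos (x * θ)) / θ ^ 2)
      (s * sin (s * θ)) s := by
    have hlin : HasDerivAt (fun x => x * θ) θ s := by simpa using (hasDerivAt_id s).mul_const θ
    exact ((hlin.sin.sub (hlin.mul hlin.cos)).div_const _).congr_deriv (by field_simp; ring)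
  rw [intervalIntegral.integral_eq_sub_of_hasDerivAt (fun s _ => hderiv s)
    (Continuous.intervalIntegrable (by fun_prop) _ _)]
  simp

theorem integral_mul_cos_mul (hθ : θ ≠ 0) :
    ∫ s in (0:ℝ)..1, s * cos (s * θ) = (cos θ + θ * sin θ - 1) / θ ^ 2 := by
  have hderiv (s : ℝ) : HasDerivAt (fun x => (cos (x * θ) + x * θ * sin (x * θ)) / θ ^ 2)
      (s * cos (s * θ)) s := by
    have hlin : HasDerivAt (fun x => x * θ) θ s := by simpa using (hasDerivAt_id s).mul_const θ
    exact ((hlin.cos.add (hlin.mul hlin.sin)).div_const _).congr_deriv (by field_simp; ring)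
  rw [intervalIntegral.integral_eq_sub_of_hasDerivAt (fun s _ => hderiv s)
    (Continuous.intervalIntegrable (by fun_prop) _ _)]
  simp [sub_div]

theorem integral_mul_rodrigues_coeffs (hθ : θ ≠ 0) (a b c : ℝ) :
    ∫ s in (0:ℝ)..1, s * (a + sin (s * θ) / θ * b + (1 - cos (s * θ)) / θ ^ 2 * c)
      = 1 / 2 * a + (sin θ - θ * cos θ) / θ ^ 3 * b
        + (1 / (2 * θ ^ 2) - sin θ / θ ^ 3 - (cos θ - 1) / θ ^ 4) * c := by
  have hsplit : (fun s => s * (a + sin (s * θ) / θ * b + (1 - cos (s * θ)) / θ ^ 2 * c))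
      = fun s => a * s + b / θ * (s * sin (s * θ)) + c / θ ^ 2 * (s - s * cos (s * θ)) := by
    funext s
    ring
  have hint {f : ℝ → ℝ} (hf : Continuous f) : IntervalIntegrable f MeasureTheory.volume 0 1 :=
    hf.intervalIntegrable 0 1
  rw [hsplit, intervalIntegral.integral_add (hint (by fun_prop)) (hint (by fun_prop)),
    intervalIntegral.integral_add (hint (by fun_prop)) (hint (by fun_prop)),
    intervalIntegral.integral_const_mul, intervalIntegral.integral_const_mul,
    intervalIntegral.integral_const_mul,
    intervalIntegral.integral_sub (hint (by fun_prop)) (hint (by fun_prop)),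
    integral_id, integral_mul_sin_mul hθ, integral_mul_cos_mul hθ]
  field_simp
  ring

end Integrals

/-- Closed form of the right translation kernel: for θ = ‖ω‖ ≠ 0,
Q_r(ω) = ∫₀¹ s·exp(s[ω]×) ds
       = ½I + ((sin θ − θ cos θ)/θ³)[ω]× + (1/(2θ²) − sin θ/θ³ − (cos θ−1)/θ⁴)[ω]×². -/
theorem Qr_closed_form (ω : EuclideanSpace ℝ (Fin 3)) (hω : ‖ω‖ ≠ 0) :
    (Matrix.of fun i j => ∫ s in (0:ℝ)..1, s * mexp (s • skew ω) i j)
      = (1 / 2 : ℝ) • (1 : Matrix (Fin 3) (Fin 3) ℝ)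
        + ((Real.sin ‖ω‖ - ‖ω‖ * Real.cos ‖ω‖) / ‖ω‖ ^ 3) • skew ω
        + (1 / (2 * ‖ω‖ ^ 2) - Real.sin ‖ω‖ / ‖ω‖ ^ 3
            - (Real.cos ‖ω‖ - 1) / ‖ω‖ ^ 4) • (skew ω * skew ω) := by
  ext i j
  simp only [of_apply, mexp_smul_skew ω hω, Matrix.add_apply, Matrix.smul_apply, smul_eq_mul]
  exact integral_mul_rodrigues_coeffs hω _ _ _
end

section
/- Consider the closed-loop system ξ̇_p = −[ω̄(t)]×ξ_p − K_pξ_p + e_v, ė_v = −[ω̄(t)]×e_v − K_ve_v + Be_r, ė_r = −[ω̄(t)]×e_r − K_re_r, with K_p, K_v, K_r symmetric positive definite and B = −T̄[e_T]× a fixed matrix. If λ_min(K_r) > ‖B‖²/(2λ_min(K_v)), then the origin is exponentially stable: there exist c, α > 0 such that ‖(ξ_p(t), e_v(t), e_r(t))‖ ≤ c e^{−αt}‖(ξ_p(0), e_v(0), e_r(0))‖ for all t ≥ 0 and every solution. -/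
open Matrix Real

/-- Operator (Euclidean) norm of a 3×3 real matrix. -/
noncomputable def opNorm (B : Matrix (Fin 3) (Fin 3) ℝ) : ℝ :=
  ‖Matrix.toEuclideanCLM (𝕜 := ℝ) (n := Fin 3) B‖

/-!
The rotation terms are lossless, `⟪x, [ω]× x⟫ = 0`, so along solutions `d/dt ‖x‖² = 2 ⟪x, ẋ⟫`
only sees the damping `-K x`, which contributes at most `-λ_min(K) ‖x‖²`, and the cascade
couplings. For the weighted Lyapunov function `V = ε ‖ξ_p‖² + ‖e_v‖² + ‖e_r‖²`, Young's inequality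
absorbs the couplings `ε ⟪ξ_p, e_v⟫` and `⟪e_v, B e_r⟫` into the diagonal terms once
`ε / λ_min(K_p) ≤ λ_min(K_v) - ‖B‖² / (2 λ_min(K_r))`, and the gain condition says precisely that
the right-hand side is positive. Then `V̇ ≤ -2κ V`, Grönwall gives `V(t) ≤ e^{-2κt} V(0)`, and
comparing `V` with the squared norm (`ε ≤ 1`) costs the factor `ε^{-1/2}`.
-/

open scoped RealInnerProductSpace

section

variable {n : Type*} [Fintype n] [DecidableEq n]

lemma inner_toLp_mulVec_le (B : Matrix n n ℝ) (x y : EuclideanSpace ℝ n) :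
    ⟪x, WithLp.toLp 2 (B *ᵥ y)⟫ ≤ ‖toEuclideanCLM (𝕜 := ℝ) B‖ * (‖x‖ * ‖y‖) :=
  calc ⟪x, toEuclideanCLM (𝕜 := ℝ) B y⟫
      ≤ ‖x‖ * ‖toEuclideanCLM (𝕜 := ℝ) B y‖ := real_inner_le_norm _ _
    _ ≤ ‖x‖ * (‖toEuclideanCLM (𝕜 := ℝ) B‖ * ‖y‖) := by
        gcongr; exact (toEuclideanCLM (𝕜 := ℝ) B).le_opNorm y
    _ = _ := by ring

lemma Matrix.IsHermitian.iInf_eigenvalues_mul_norm_sq_le {A : Matrix n n ℝ} (hA : A.IsHermitian)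
    (x : EuclideanSpace ℝ n) :
    (⨅ i, hA.eigenvalues i) * ‖x‖ ^ 2 ≤ ⟪x, WithLp.toLp 2 (A *ᵥ x)⟫ := by
  set b := hA.eigenvectorBasis
  have hAb : ∀ j, ⟪b j, WithLp.toLp 2 (A *ᵥ x)⟫ = hA.eigenvalues j * ⟪b j, x⟫ := by
    intro j
    have hsymm := (isSymmetric_toEuclideanLin_iff.2 hA) (b j) x
    have hbj : toEuclideanLin A (b j) = hA.eigenvalues j • b j :=
      congrArg (WithLp.toLp 2) (hA.mulVec_eigenvectorBasis j)
    rw [hbj, real_inner_smul_left] at hsymm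
    exact hsymm.symm
  rw [← b.sum_inner_mul_inner x, ← real_inner_self_eq_norm_sq, ← b.sum_inner_mul_inner x,
    Finset.mul_sum]
  refine Finset.sum_le_sum fun j _ => ?_
  rw [hAb, real_inner_comm x (b j)]
  have := ciInf_le (Set.finite_range hA.eigenvalues).bddBelow j
  nlinarith [sq_nonneg ⟪b j, x⟫]

lemma Matrix.PosDef.iInf_eigenvalues_pos [Nonempty n] {A : Matrix n n ℝ} (hA : A.PosDef) :
    0 < ⨅ i, hA.1.eigenvalues i := by
  obtain ⟨j, hj⟩ := exists_eq_ciInf_of_finite (f := hA.1.eigenvalues)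
  exact hj ▸ hA.eigenvalues_pos j

end

lemma inner_toLp_skew_mulVec_self (ω : Fin 3 → ℝ) (x : EuclideanSpace ℝ (Fin 3)) :
    ⟪x, WithLp.toLp 2 (skew ω *ᵥ x)⟫ = 0 := by
  simp [PiLp.inner_apply, skew, dotProduct, Fin.sum_univ_three]
  ring

lemma inner_toLp_neg_skew_sub_mulVec_le (ω : Fin 3 → ℝ) {K : Matrix (Fin 3) (Fin 3) ℝ}
    (hK : K.IsHermitian) (x : EuclideanSpace ℝ (Fin 3)) :
    ⟪x, WithLp.toLp 2 (-(skew ω *ᵥ x) - K *ᵥ x)⟫ ≤ -(⨅ i, hK.eigenvalues i) * ‖x‖ ^ 2 := by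
  rw [WithLp.toLp_sub, WithLp.toLp_neg, inner_sub_right, inner_neg_right,
    inner_toLp_skew_mulVec_self]
  linarith [hK.iInf_eigenvalues_mul_norm_sq_le x]

lemma le_mul_exp_of_hasDerivAt_le_neg_mul {V V' : ℝ → ℝ} {β : ℝ}
    (hV : ∀ t ≥ 0, HasDerivAt V (V' t) t) (hle : ∀ t ≥ 0, V' t ≤ -β * V t) {t : ℝ} (ht : 0 ≤ t) :
    V t ≤ V 0 * exp (-β * t) := by
  have := le_gronwallBound_of_liminf_deriv_right_le (f := V) (f' := V') (δ := V 0) (K := -β)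
    (ε := 0) (a := 0) (b := t)
    (fun s hs => (hV s hs.1).continuousAt.continuousWithinAt)
    (fun s hs r hr => (hV s hs.1).hasDerivWithinAt.liminf_right_slope_le hr)
    le_rfl (fun s hs => by simpa using hle s hs.1) t ⟨ht, le_rfl⟩
  simpa [gronwallBound_ε0] using this

lemma sqrt_le_sqrt_mul_exp_mul_sqrt {S S₀ C α t : ℝ} (hC : 0 ≤ C)
    (h : S ≤ C * exp (-(2 * α) * t) * S₀) : √S ≤ √C * exp (-α * t) * √S₀ := by
  have hexp : exp (-(2 * α) * t) = exp (-α * t) ^ 2 := by rw [← exp_nat_mul]; ring_nf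
  calc √S ≤ √(C * exp (-(2 * α) * t) * S₀) := sqrt_le_sqrt h
    _ = √C * exp (-α * t) * √S₀ := by
      rw [sqrt_mul (by positivity), sqrt_mul hC, hexp, sqrt_sq (exp_nonneg _)]

lemma exists_cascade_lyapunov_weights {a b c k : ℝ} (ha : 0 < a) (hc : 0 < c)
    (hk : k ^ 2 < 2 * b * c) :
    ∃ ε > 0, ε ≤ 1 ∧ ∃ κ > 0, ∀ X Y Z : ℝ,
      ε * (-a * X ^ 2 + X * Y) + (-b * Y ^ 2 + k * (Y * Z)) - c * Z ^ 2
        ≤ -κ * (ε * X ^ 2 + Y ^ 2 + Z ^ 2) := by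
  set δ := b - k ^ 2 / (2 * c)
  have hδ : 0 < δ := by
    have : k ^ 2 / (2 * c) < b := by rw [div_lt_iff₀ (by positivity)]; linarith
    linarith
  set ε := min 1 (a * δ)
  set κ := min a (min δ c) / 2
  have hε : 0 < ε := by positivity
  refine ⟨ε, hε, min_le_left _ _, κ, by positivity, fun X Y Z => ?_⟩
  have hxy : ε * (X * Y) ≤ a / 2 * (ε * X ^ 2) + ε / (2 * a) * Y ^ 2 := by
    have := mul_nonneg (div_nonneg hε.le (mul_nonneg zero_le_two ha.le)) (sq_nonneg (a * X - Y))
    field_simp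
    nlinarith
  have hyz : k * (Y * Z) ≤ k ^ 2 / (2 * c) * Y ^ 2 + c / 2 * Z ^ 2 := by
    have := div_nonneg (sq_nonneg (k * Y - c * Z)) (mul_nonneg zero_le_two hc.le)
    field_simp
    nlinarith
  have hεδ : ε / (2 * a) ≤ δ / 2 := by
    rw [div_le_iff₀ (by positivity)]
    nlinarith [min_le_right 1 (a * δ)]
  have hκa : κ ≤ a / 2 := div_le_div_of_nonneg_right (min_le_left _ _) zero_le_two
  have hκδ : κ ≤ δ / 2 :=
    div_le_div_of_nonneg_right ((min_le_right _ _).trans (min_le_left _ _)) zero_le_two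
  have hκc : κ ≤ c / 2 :=
    div_le_div_of_nonneg_right ((min_le_right _ _).trans (min_le_right _ _)) zero_le_two
  have hεX : 0 ≤ ε * X ^ 2 := by positivity
  calc ε * (-a * X ^ 2 + X * Y) + (-b * Y ^ 2 + k * (Y * Z)) - c * Z ^ 2
      ≤ -(a / 2) * (ε * X ^ 2) - (δ / 2) * Y ^ 2 - (c / 2) * Z ^ 2 := by
        nlinarith [mul_le_mul_of_nonneg_right hεδ (sq_nonneg Y)]
    _ ≤ -κ * (ε * X ^ 2 + Y ^ 2 + Z ^ 2) := by
        nlinarith [mul_le_mul_of_nonneg_right hκa hεX, mul_le_mul_of_nonneg_right hκδ (sq_nonneg Y),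
          mul_le_mul_of_nonneg_right hκc (sq_nonneg Z)]

theorem exists_exp_bound_of_cascade {E : Type*} [NormedAddCommGroup E] [InnerProductSpace ℝ E]
    {x y z x' y' z' : ℝ → E} {a b c k : ℝ} (ha : 0 < a) (hc : 0 < c) (hk : k ^ 2 < 2 * b * c)
    (hx : ∀ t ≥ (0 : ℝ), HasDerivAt x (x' t) t) (hy : ∀ t ≥ (0 : ℝ), HasDerivAt y (y' t) t)
    (hz : ∀ t ≥ (0 : ℝ), HasDerivAt z (z' t) t)
    (hxx : ∀ t ≥ (0 : ℝ), ⟪x t, x' t⟫ ≤ -a * ‖x t‖ ^ 2 + ‖x t‖ * ‖y t‖)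
    (hyy : ∀ t ≥ (0 : ℝ), ⟪y t, y' t⟫ ≤ -b * ‖y t‖ ^ 2 + k * (‖y t‖ * ‖z t‖))
    (hzz : ∀ t ≥ (0 : ℝ), ⟪z t, z' t⟫ ≤ -c * ‖z t‖ ^ 2) :
    ∃ C > (0 : ℝ), ∃ α > (0 : ℝ), ∀ t ≥ (0 : ℝ),
      √(‖x t‖ ^ 2 + ‖y t‖ ^ 2 + ‖z t‖ ^ 2)
        ≤ C * exp (-α * t) * √(‖x 0‖ ^ 2 + ‖y 0‖ ^ 2 + ‖z 0‖ ^ 2) := by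
  obtain ⟨ε, hε, hε1, κ, hκ, hweights⟩ := exists_cascade_lyapunov_weights ha hc hk
  set V : ℝ → ℝ := fun t => ε * ‖x t‖ ^ 2 + ‖y t‖ ^ 2 + ‖z t‖ ^ 2
  have hV : ∀ t ≥ (0 : ℝ), HasDerivAt V
      (ε * (2 * ⟪x t, x' t⟫) + 2 * ⟪y t, y' t⟫ + 2 * ⟪z t, z' t⟫) t := fun t ht =>
    (((hx t ht).norm_sq.const_mul ε).add (hy t ht).norm_sq).add (hz t ht).norm_sq
  have hV' : ∀ t ≥ (0 : ℝ),
      ε * (2 * ⟪x t, x' t⟫) + 2 * ⟪y t, y' t⟫ + 2 * ⟪z t, z' t⟫ ≤ -(2 * κ) * V t := by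
    intro t ht
    have := hweights ‖x t‖ ‖y t‖ ‖z t‖
    nlinarith [hxx t ht, hyy t ht, hzz t ht]
  refine ⟨√(1 / ε), by positivity, κ, hκ, fun t ht => sqrt_le_sqrt_mul_exp_mul_sqrt
    (by positivity) ?_⟩
  have hVt := le_mul_exp_of_hasDerivAt_le_neg_mul hV hV' ht
  have hlow : ε * (‖x t‖ ^ 2 + ‖y t‖ ^ 2 + ‖z t‖ ^ 2) ≤ V t := by
    have hεy := mul_le_of_le_one_left (sq_nonneg ‖y t‖) hε1
    have hεz := mul_le_of_le_one_left (sq_nonneg ‖z t‖) hε1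
    simp only [V]
    linarith
  have hup : V 0 ≤ ‖x 0‖ ^ 2 + ‖y 0‖ ^ 2 + ‖z 0‖ ^ 2 := by
    have hεx := mul_le_of_le_one_left (sq_nonneg ‖x 0‖) hε1
    simp only [V]
    linarith
  rw [one_div_mul_eq_div, div_mul_eq_mul_div, le_div_iff₀' hε]
  calc _ ≤ V t := hlow
    _ ≤ V 0 * exp (-(2 * κ) * t) := hVt
    _ ≤ _ := by rw [mul_comm]; gcongr

theorem closed_loop_exponential_stability_general
    (Kp Kv Kr : Matrix (Fin 3) (Fin 3) ℝ)
    (hKp : Kp.PosDef) (hKv : Kv.PosDef) (hKr : Kr.PosDef)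
    (B : Matrix (Fin 3) (Fin 3) ℝ)
    (hgain : (⨅ i, hKr.1.eigenvalues i)
      > opNorm B ^ 2 / (2 * ⨅ i, hKv.1.eigenvalues i))
    (ωbar : ℝ → Fin 3 → ℝ)
    (ξp ev er : ℝ → EuclideanSpace ℝ (Fin 3))
    (hξp : ∀ t ≥ (0 : ℝ), HasDerivAt ξp
      ((WithLp.equiv 2 (Fin 3 → ℝ)).symm (-((skew (ωbar t)).mulVec (ξp t)) - Kp.mulVec (ξp t) + WithLp.equiv 2 (Fin 3 → ℝ) (ev t) : Fin 3 → ℝ)) t)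
    (hev : ∀ t ≥ (0 : ℝ), HasDerivAt ev
      (WithLp.toLp 2 (-((skew (ωbar t)).mulVec (ev t)) - Kv.mulVec (ev t) + B.mulVec (er t))) t)
    (her : ∀ t ≥ (0 : ℝ), HasDerivAt er
      (WithLp.toLp 2 (-((skew (ωbar t)).mulVec (er t)) - Kr.mulVec (er t))) t) :
    ∃ c > (0 : ℝ), ∃ α > (0 : ℝ), ∀ t ≥ (0 : ℝ),
      Real.sqrt (‖ξp t‖ ^ 2 + ‖ev t‖ ^ 2 + ‖er t‖ ^ 2)
        ≤ c * Real.exp (-α * t)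
            * Real.sqrt (‖ξp 0‖ ^ 2 + ‖ev 0‖ ^ 2 + ‖er 0‖ ^ 2) := by
  have hlv := hKv.iInf_eigenvalues_pos
  have hk : opNorm B ^ 2 < 2 * (⨅ i, hKv.1.eigenvalues i) * ⨅ i, hKr.1.eigenvalues i := by
    rw [gt_iff_lt, div_lt_iff₀ (by positivity)] at hgain
    linarith
  refine exists_exp_bound_of_cascade hKp.iInf_eigenvalues_pos hKr.iInf_eigenvalues_pos hk
    hξp hev her (fun t _ => ?_) (fun t _ => ?_) (fun t _ => ?_)
  · rw [WithLp.equiv_symm_apply, WithLp.toLp_add, inner_add_right, WithLp.equiv_apply,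
      WithLp.toLp_ofLp]
    linarith [inner_toLp_neg_skew_sub_mulVec_le (ωbar t) hKp.1 (ξp t),
      real_inner_le_norm (ξp t) (ev t)]
  · rw [WithLp.toLp_add, inner_add_right]
    have hB : ⟪ev t, WithLp.toLp 2 (B *ᵥ er t)⟫ ≤ opNorm B * (‖ev t‖ * ‖er t‖) :=
      inner_toLp_mulVec_le B (ev t) (er t)
    linarith [inner_toLp_neg_skew_sub_mulVec_le (ωbar t) hKv.1 (ev t)]
  · exact inner_toLp_neg_skew_sub_mulVec_le (ωbar t) hKr.1 (er t)

/-- Exponential stability of the closed-loop log-linear backstepping error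
dynamics: if λ_min(K_r) > ‖B‖²/(2λ_min(K_v)), the origin is exponentially
stable. -/
theorem closed_loop_exponential_stability
    (Kp Kv Kr : Matrix (Fin 3) (Fin 3) ℝ)
    (hKp : Kp.PosDef) (hKv : Kv.PosDef) (hKr : Kr.PosDef)
    (Tbar : ℝ) (hT : 0 ≤ Tbar) (eT : EuclideanSpace ℝ (Fin 3)) (heT : ‖eT‖ = 1)
    (B : Matrix (Fin 3) (Fin 3) ℝ) (hB : B = -(Tbar • skew eT))
    (hgain : (⨅ i, hKr.1.eigenvalues i)
      > opNorm B ^ 2 / (2 * ⨅ i, hKv.1.eigenvalues i))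
    (ωbar : ℝ → Fin 3 → ℝ)
    (ξp ev er : ℝ → EuclideanSpace ℝ (Fin 3))
    (hξp : ∀ t ≥ (0 : ℝ), HasDerivAt ξp
      ((WithLp.equiv 2 (Fin 3 → ℝ)).symm (-((skew (ωbar t)).mulVec (ξp t)) - Kp.mulVec (ξp t) + WithLp.equiv 2 (Fin 3 → ℝ) (ev t) : Fin 3 → ℝ)) t)
    (hev : ∀ t ≥ (0 : ℝ), HasDerivAt ev
      (WithLp.toLp 2 (-((skew (ωbar t)).mulVec (ev t)) - Kv.mulVec (ev t) + B.mulVec (er t))) t)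
    (her : ∀ t ≥ (0 : ℝ), HasDerivAt er
      (WithLp.toLp 2 (-((skew (ωbar t)).mulVec (er t)) - Kr.mulVec (er t))) t) :
    ∃ c > (0 : ℝ), ∃ α > (0 : ℝ), ∀ t ≥ (0 : ℝ),
      Real.sqrt (‖ξp t‖ ^ 2 + ‖ev t‖ ^ 2 + ‖er t‖ ^ 2)
        ≤ c * Real.exp (-α * t)
            * Real.sqrt (‖ξp 0‖ ^ 2 + ‖ev 0‖ ^ 2 + ‖er 0‖ ^ 2) :=
  closed_loop_exponential_stability_general Kp Kv Kr hKp hKv hKr B hgain ωbar ξp ev er hξp hev her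
end
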